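/- arXiv:2502.13768 — 5 statements merged into one kernel-verified Lean document; each statement's English description precedes it below -/
import Mathlib

section
/- (Newman's approximation theorem, Theorem 3.3.1.) Let n ≥ 6 be an integer and define H_n(x) = ∏_{k=1}^{n²−1} (x + e^{−k/n}). Then for every x ∈ [−1,1] one has H_n(x) + H_n(−x) ≥ 2·e^{−(n³−n)/2}, and | |x| − x·(H_n(x) − H_n(−x))/(H_n(x) + H_n(−x)) | ≤ 3·e^{−n}. Moreover 3·e^{−n} ≤ 2^{−(n+1)}. -/
open Finset

lemma newman_aux_exp_half (u : ℝ) (h0 : 0 ≤ u) (h1 : u ≤ 1) : Real.exp (u / 2) ≤ 1 + u := by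
  have h2 : 1 - u / 2 ≤ Real.exp (-(u / 2)) := by
    have := Real.add_one_le_exp (-(u / 2)); linarith
  have h3 : Real.exp (u / 2) * Real.exp (-(u / 2)) = 1 := by
    rw [← Real.exp_add]; simp
  have h4 : (0:ℝ) < Real.exp (u / 2) := Real.exp_pos _
  have h5 : (0:ℝ) < Real.exp (-(u / 2)) := Real.exp_pos _
  nlinarith

lemma newman_one_side (x c u : ℝ) (hx : 0 < x) (hxc : x ≤ c) (h0 : 0 ≤ u)
    (hu : u ≤ x / c) : c - x ≤ Real.exp (-(3 * u / 2)) * (c + x) := by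
  have hc : 0 < c := lt_of_lt_of_le hx hxc
  have hu1 : u ≤ 1 := hu.trans (by rw [div_le_one hc]; exact hxc)
  have hcu : c * u ≤ x := by
    have := (le_div_iff₀ hc).mp hu; linarith
  have h2 : 1 - u ≤ Real.exp (-u) := by
    have := Real.add_one_le_exp (-u); linarith
  have h3 : Real.exp (u / 2) ≤ 1 + u := newman_aux_exp_half u h0 hu1
  have key : Real.exp (-(3 * u / 2)) * Real.exp (u / 2) = Real.exp (-u) := by
    rw [← Real.exp_add]; ring_nf
  have hE : (0:ℝ) < Real.exp (-(3 * u / 2)) := Real.exp_pos _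
  calc c - x ≤ c * (1 - u) := by nlinarith
    _ ≤ c * Real.exp (-u) := by nlinarith
    _ = Real.exp (-(3 * u / 2)) * (c * Real.exp (u / 2)) := by rw [← key]; ring
    _ ≤ Real.exp (-(3 * u / 2)) * (c + x) := by
        have : c * Real.exp (u / 2) ≤ c + x := by nlinarith
        exact mul_le_mul_of_nonneg_left this hE.le

lemma newman_evenodd (c : ℕ → ℝ) (hc : ∀ k, 0 < c k) (s : Finset ℕ) (x : ℝ) :
    2 * ∏ k ∈ s, c k ≤ (∏ k ∈ s, (x + c k)) + (∏ k ∈ s, (-x + c k)) ∧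
    0 ≤ x * ((∏ k ∈ s, (x + c k)) - (∏ k ∈ s, (-x + c k))) := by
  induction s using Finset.cons_induction with
  | empty => norm_num
  | cons k s hk ih =>
    obtain ⟨ih1, ih2⟩ := ih
    have hprod : (0:ℝ) < ∏ j ∈ s, c j := Finset.prod_pos (fun j _ => hc j)
    rw [Finset.prod_cons, Finset.prod_cons, Finset.prod_cons]
    constructor
    · nlinarith [hc k]
    · nlinarith [hc k, sq_nonneg x]

lemma newman_geom (r : ℝ) (L : ℕ) : (1 - r) * ∑ j ∈ Ioc 0 L, r ^ j = r - r ^ (L + 1) := by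
  induction L with
  | zero => simp
  | succ L ih =>
    rw [← Finset.Icc_add_one_left_eq_Ioc] at ih ⊢
    rw [Finset.sum_Icc_succ_top (by omega), mul_add, ih]
    ring

lemma newman_reflect (m : ℕ) (f : ℕ → ℝ) :
    ∑ k ∈ Ioc 0 m, f (m + 1 - k) = ∑ k ∈ Ioc 0 m, f k := by
  apply Finset.sum_nbij' (fun k => m + 1 - k) (fun k => m + 1 - k) <;>
    intros <;> simp_all [Finset.mem_Ioc] <;> omega

lemma newman_shift (m N : ℕ) (f : ℕ → ℝ) :
    ∑ k ∈ Ioc m N, f (k - m) = ∑ j ∈ Ioc 0 (N - m), f j := by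
  apply Finset.sum_nbij' (fun k => k - m) (fun j => j + m) <;>
    intros <;> simp_all [Finset.mem_Ioc] <;> omega

lemma newman_exp1 : (2.7 : ℝ) < Real.exp 1 := by
  have := Real.exp_one_gt_d9; linarith

lemma newman_exp5 : (100 : ℝ) ≤ Real.exp 5 := by
  have h9 : Real.exp (5 : ℝ) = Real.exp 1 ^ 5 := by
    rw [← Real.exp_nat_mul]; norm_num
  calc (100 : ℝ) ≤ 2.7 ^ 5 := by norm_num
    _ ≤ Real.exp 1 ^ 5 := pow_le_pow_left₀ (by norm_num) newman_exp1.le 5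
    _ = Real.exp 5 := h9.symm

lemma newman_exp_sixth : Real.exp ((1:ℝ) / 6) ≤ 3 / 2 := by
  have h : Real.exp ((1:ℝ) / 6) ^ 6 = Real.exp 1 := by
    rw [← Real.exp_nat_mul]; norm_num
  have h2 : Real.exp ((1:ℝ) / 6) ^ 6 ≤ (3/2 : ℝ) ^ 6 := by
    rw [h]
    have := Real.exp_one_lt_d9
    norm_num
    linarith
  exact le_of_pow_le_pow_left₀ (by norm_num) (by norm_num) h2

lemma newman_arith (nr r S1 S2 p q rN : ℝ) (hn6 : 6 ≤ nr) (hr0 : 0 < r) (hr1 : r < 1)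
    (hrge : 1 - 1 / nr ≤ r) (hrN : rN ≤ 1 / 100) (hpq : p * q = rN) (hp1 : p ≤ 1)
    (hq1 : q ≤ 1) (hp0 : 0 < p) (hq0 : 0 < q) (hS10 : 0 ≤ S1) (hS20 : 0 ≤ S2)
    (hg1 : (1 - r) * S1 = r - p * r) (hg2 : (1 - r) * S2 = r - q * r) :
    2 * nr / 3 ≤ S1 + S2 := by
  have hn0 : (0 : ℝ) < nr := by linarith
  have e : nr * (1 / nr) = 1 := by field_simp
  have hinv : 0 < 1 / nr := by positivity
  have hinv6 : 1 / nr ≤ 1 / 6 := by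
    rw [div_le_div_iff₀ hn0 (by norm_num)]; linarith
  have hrN0 : 0 < rN := hpq ▸ mul_pos hp0 hq0
  have step1 : r * (1 - rN) ≤ (1 - r) * (S1 + S2) := by
    nlinarith [mul_nonneg (sub_nonneg.mpr hp1) (sub_nonneg.mpr hq1)]
  have step2 : (1 - 1 / nr) * (99 / 100) ≤ r * (1 - rN) := by
    nlinarith
  have step3 : (1 - 1 / nr) * (99 / 100) ≤ (1 / nr) * (S1 + S2) := by
    nlinarith
  have step4 : nr * ((1 - 1 / nr) * (99 / 100)) ≤ S1 + S2 := by
    have h := mul_le_mul_of_nonneg_left step3 hn0.le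
    calc nr * ((1 - 1 / nr) * (99 / 100)) ≤ nr * ((1 / nr) * (S1 + S2)) := h
      _ = (nr * (1 / nr)) * (S1 + S2) := by ring
      _ = S1 + S2 := by rw [e, one_mul]
  have step5 : nr * ((1 - 1 / nr) * (99 / 100)) = (nr - 1) * (99 / 100) := by
    field_simp
  rw [step5] at step4
  linarith

lemma newman_sum_bound (n N m : ℕ) (hn : 6 ≤ n) (hN : N = n ^ 2 - 1) (hmN : m ≤ N)
    (u : ℕ → ℝ)
    (h1 : ∀ k ∈ Ioc 0 m, (Real.exp (-(1 : ℝ) / n)) ^ (m + 1 - k) ≤ u k)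
    (h2 : ∀ k ∈ Ioc m N, (Real.exp (-(1 : ℝ) / n)) ^ (k - m) ≤ u k) :
    2 * (n : ℝ) / 3 ≤ ∑ k ∈ Icc 1 N, u k := by
  have hn6 : (6 : ℝ) ≤ (n : ℝ) := by exact_mod_cast hn
  have hn0 : (0 : ℝ) < n := by linarith
  set r := Real.exp (-(1 : ℝ) / n) with hr
  have hr0 : 0 < r := Real.exp_pos _
  have hr1 : r < 1 := by
    rw [hr, Real.exp_lt_one_iff]
    have : (0:ℝ) < 1 / n := by positivity
    rw [neg_div]; linarith
  have hrge : 1 - 1 / (n : ℝ) ≤ r := by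
    have h := Real.add_one_le_exp (-(1 : ℝ) / n)
    rw [hr]; rw [neg_div] at h ⊢; linarith
  have hNr : ((N : ℕ) : ℝ) = (n : ℝ) ^ 2 - 1 := by
    subst hN
    have h1 : 1 ≤ n ^ 2 := by nlinarith
    push_cast [Nat.cast_sub h1]
    ring
  have hrN : r ^ N ≤ 1 / 100 := by
    have h5 : r ^ N = Real.exp ((N : ℝ) * (-(1 : ℝ) / n)) := by
      rw [hr, ← Real.exp_nat_mul]
    have h6' : (5 : ℝ) ≤ ((n : ℝ) ^ 2 - 1) / n := by
      rw [le_div_iff₀ hn0]; nlinarith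
    have h6 : (N : ℝ) * (-(1 : ℝ) / n) ≤ -5 := by
      rw [hNr, show ((n:ℝ)^2 - 1) * (-(1:ℝ)/n) = -(((n:ℝ)^2 - 1)/n) from by ring]
      linarith [h6']
    have h7 : Real.exp ((N : ℝ) * (-(1 : ℝ) / n)) ≤ Real.exp (-5) := Real.exp_le_exp.mpr h6
    have h8 : Real.exp (-5 : ℝ) ≤ 1 / 100 := by
      rw [Real.exp_neg, inv_le_comm₀ (Real.exp_pos _) (by norm_num : (0:ℝ) < 1/100)]
      have := newman_exp5; norm_num; linarith
    rw [h5]; linarith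
  have hsplit : (∑ k ∈ Ioc 0 m, u k) + ∑ k ∈ Ioc m N, u k = ∑ k ∈ Icc 1 N, u k := by
    rw [← Finset.Icc_add_one_left_eq_Ioc]
    exact Finset.sum_Ioc_consecutive u (Nat.zero_le m) hmN
  have hp1 : ∑ k ∈ Ioc 0 m, r ^ (m + 1 - k) ≤ ∑ k ∈ Ioc 0 m, u k :=
    Finset.sum_le_sum h1
  have hp2 : ∑ k ∈ Ioc m N, r ^ (k - m) ≤ ∑ k ∈ Ioc m N, u k :=
    Finset.sum_le_sum h2
  rw [newman_reflect m (fun j => r ^ j)] at hp1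
  rw [newman_shift m N (fun j => r ^ j)] at hp2
  have hg1 : (1 - r) * ∑ j ∈ Ioc 0 m, r ^ j = r - r ^ m * r := by
    rw [newman_geom r m]; ring
  have hg2 : (1 - r) * ∑ j ∈ Ioc 0 (N - m), r ^ j = r - r ^ (N - m) * r := by
    rw [newman_geom r (N - m)]; ring
  have hpow : r ^ m * r ^ (N - m) = r ^ N := by
    rw [← pow_add]; congr 1; omega
  have harith := newman_arith (n : ℝ) r (∑ j ∈ Ioc 0 m, r ^ j) (∑ j ∈ Ioc 0 (N - m), r ^ j)
    (r ^ m) (r ^ (N - m)) (r ^ N) hn6 hr0 hr1 hrge hrN hpow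
    (pow_le_one₀ hr0.le hr1.le) (pow_le_one₀ hr0.le hr1.le) (pow_pos hr0 m) (pow_pos hr0 (N - m))
    (Finset.sum_nonneg fun j _ => (pow_pos hr0 j).le)
    (Finset.sum_nonneg fun j _ => (pow_pos hr0 j).le) hg1 hg2
  linarith [hsplit ▸ (add_le_add hp1 hp2), harith]

lemma newman_sum_Icc_id (M : ℕ) : ∑ k ∈ Icc 1 M, (k : ℝ) = (M : ℝ) * ((M : ℝ) + 1) / 2 := by
  induction M with
  | zero => simp
  | succ M ih =>
    rw [Finset.sum_Icc_succ_top (by omega), ih]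
    push_cast; ring

lemma newman_main_est (n N : ℕ) (hn : 6 ≤ n) (hN : N = n ^ 2 - 1)
    (y : ℝ) (hy1 : y ≤ 1) (hAy : Real.exp (-(N : ℝ) / n) ≤ y) :
    |∏ k ∈ Icc 1 N, (-y + Real.exp (-(k : ℝ) / n))| ≤
      Real.exp (-(n : ℝ)) * ∏ k ∈ Icc 1 N, (y + Real.exp (-(k : ℝ) / n)) := by
  have hn6 : (6 : ℝ) ≤ (n : ℝ) := by exact_mod_cast hn
  have hn0 : (0 : ℝ) < n := by linarith
  have hy0 : 0 < y := lt_of_lt_of_le (Real.exp_pos _) hAy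
  set s : ℝ := -Real.log y with hsdef
  have hys : Real.exp (-s) = y := by
    rw [hsdef, neg_neg, Real.exp_log hy0]
  have hs0 : 0 ≤ s := by
    have := Real.log_nonpos hy0.le hy1
    rw [hsdef]; linarith
  have hsN : s ≤ (N : ℝ) / n := by
    have h := Real.log_le_log (Real.exp_pos _) hAy
    rw [Real.log_exp] at h
    rw [hsdef]
    have : -((N:ℝ)/n) = (-(N:ℝ))/n := by ring
    linarith [h, this ▸ h]
  set m : ℕ := ⌊(n : ℝ) * s⌋₊ with hmdef
  have hm_le : (m : ℝ) ≤ (n : ℝ) * s := Nat.floor_le (by positivity)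
  have hm_lt : (n : ℝ) * s < (m : ℝ) + 1 := Nat.lt_floor_add_one _
  have hmN : m ≤ N := by
    have h1 : (n : ℝ) * s ≤ (N : ℝ) := by
      rw [mul_comm, ← le_div_iff₀ hn0]; exact hsN
    have : (m : ℝ) ≤ (N : ℝ) := le_trans hm_le h1
    exact_mod_cast this
  set u : ℕ → ℝ := fun k => Real.exp (-|(k : ℝ) / n - s|) with hudef
  have hu0 : ∀ k, 0 ≤ u k := fun k => (Real.exp_pos _).le
  -- pointwise lower bounds for the sum
  have h1 : ∀ k ∈ Ioc 0 m, (Real.exp (-(1 : ℝ) / n)) ^ (m + 1 - k) ≤ u k := by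
    intro k hk
    obtain ⟨hk0, hkm⟩ := Finset.mem_Ioc.mp hk
    have hkr : (k : ℝ) ≤ (m : ℝ) := by exact_mod_cast hkm
    have hcast : (((m + 1 - k : ℕ)) : ℝ) = (m : ℝ) + 1 - (k : ℝ) := by
      have : k ≤ m + 1 := by omega
      push_cast [Nat.cast_sub this]; ring
    rw [← Real.exp_nat_mul, hcast]
    apply Real.exp_le_exp.mpr
    have e1 : (k : ℝ) / n ≤ s := by
      rw [div_le_iff₀ hn0]; nlinarith
    have e2 : s ≤ ((m : ℝ) + 1) / n := by
      rw [le_div_iff₀ hn0]; nlinarith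
    rw [abs_of_nonpos (by linarith : (k : ℝ) / n - s ≤ 0)]
    have expand : ((m : ℝ) + 1 - k) * (-(1 : ℝ) / n) = -(((m:ℝ)+1)/n) + (k:ℝ)/n := by
      field_simp; ring
    rw [expand]
    have e3 : ((m:ℝ)+1)/n ≥ s := e2
    linarith
  have h2 : ∀ k ∈ Ioc m N, (Real.exp (-(1 : ℝ) / n)) ^ (k - m) ≤ u k := by
    intro k hk
    obtain ⟨hkm, hkN⟩ := Finset.mem_Ioc.mp hk
    have hkr : (m : ℝ) + 1 ≤ (k : ℝ) := by exact_mod_cast hkm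
    have hcast : (((k - m : ℕ)) : ℝ) = (k : ℝ) - (m : ℝ) := by
      have : m ≤ k := by omega
      push_cast [Nat.cast_sub this]
      ring
    rw [← Real.exp_nat_mul, hcast]
    apply Real.exp_le_exp.mpr
    have e1 : s ≤ (k : ℝ) / n := by
      rw [le_div_iff₀ hn0]; nlinarith
    have e2 : (m : ℝ) / n ≤ s := by
      rw [div_le_iff₀ hn0]; nlinarith
    rw [abs_of_nonneg (by linarith : 0 ≤ (k : ℝ) / n - s)]
    have expand : ((k : ℝ) - m) * (-(1 : ℝ) / n) = -((k:ℝ)/n) + (m:ℝ)/n := by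
      field_simp; ring
    rw [expand]
    linarith
  have hT := newman_sum_bound n N m hn hN hmN u h1 h2
  -- factor bound
  have hfac : ∀ k ∈ Icc 1 N, |(-y) + Real.exp (-(k : ℝ) / n)| ≤
      Real.exp (-(3 * u k / 2)) * (y + Real.exp (-(k : ℝ) / n)) := by
    intro k _
    set a : ℝ := Real.exp (-(k : ℝ) / n) with hadef
    have ha0 : 0 < a := Real.exp_pos _
    have hu_ya : u k ≤ y / a := by
      have hya : y / a = Real.exp (-s - (-(k : ℝ) / n)) := by
        rw [Real.exp_sub, hys, hadef]
      rw [hya]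
      apply Real.exp_le_exp.mpr
      have := neg_abs_le ((k : ℝ) / n - s)
      have expand : -s - (-(k:ℝ)/n) = (k:ℝ)/n - s := by ring
      rw [expand]
      exact this
    have hu_ay : u k ≤ a / y := by
      have hay : a / y = Real.exp ((-(k : ℝ) / n) - (-s)) := by
        rw [Real.exp_sub, hys, hadef]
      rw [hay]
      apply Real.exp_le_exp.mpr
      have := le_abs_self ((k : ℝ) / n - s)
      have expand : (-(k:ℝ)/n) - (-s) = -((k:ℝ)/n - s) := by ring
      rw [expand]
      linarith
    rcases le_total y a with hcase | hcase
    · have h := newman_one_side y a (u k) hy0 hcase (hu0 k) hu_ya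
      rw [abs_of_nonneg (by linarith : (0:ℝ) ≤ -y + a)]
      linarith
    · have h := newman_one_side a y (u k) ha0 hcase (hu0 k) hu_ay
      rw [abs_of_nonpos (by linarith : -y + a ≤ 0)]
      linarith
  -- assemble
  calc |∏ k ∈ Icc 1 N, (-y + Real.exp (-(k : ℝ) / n))|
      = ∏ k ∈ Icc 1 N, |(-y + Real.exp (-(k : ℝ) / n))| := Finset.abs_prod _ _
    _ ≤ ∏ k ∈ Icc 1 N, (Real.exp (-(3 * u k / 2)) * (y + Real.exp (-(k : ℝ) / n))) :=
        Finset.prod_le_prod (fun k _ => abs_nonneg _) hfac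
    _ = (∏ k ∈ Icc 1 N, Real.exp (-(3 * u k / 2))) *
          ∏ k ∈ Icc 1 N, (y + Real.exp (-(k : ℝ) / n)) := Finset.prod_mul_distrib
    _ ≤ Real.exp (-(n : ℝ)) * ∏ k ∈ Icc 1 N, (y + Real.exp (-(k : ℝ) / n)) := by
        apply mul_le_mul_of_nonneg_right _
          (Finset.prod_nonneg fun k _ => by positivity)
        rw [← Real.exp_sum]
        apply Real.exp_le_exp.mpr
        have hsum : ∑ k ∈ Icc 1 N, -(3 * u k / 2) = -(3 / 2) * ∑ k ∈ Icc 1 N, u k := by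
          rw [Finset.mul_sum]
          exact Finset.sum_congr rfl fun k _ => by ring
        rw [hsum]
        nlinarith

open Finset in
/-- Newman's approximation theorem (Theorem 3.3.1). -/
theorem newman_approximation
    (n : ℕ) (hn : 6 ≤ n)
    (H : ℝ → ℝ)
    (hH : ∀ x : ℝ, H x = ∏ k ∈ Finset.Icc (1 : ℕ) (n ^ 2 - 1), (x + Real.exp (-(k : ℝ) / n))) :
    (∀ x ∈ Set.Icc (-1 : ℝ) 1,
        2 * Real.exp (-(((n : ℝ) ^ 3 - n) / 2)) ≤ H x + H (-x) ∧
        |(|x| - x * (H x - H (-x)) / (H x + H (-x)))| ≤ 3 * Real.exp (-(n : ℝ))) ∧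
    3 * Real.exp (-(n : ℝ)) ≤ (2 : ℝ) ^ (-((n : ℤ) + 1)) := by
  have hn6 : (6 : ℝ) ≤ (n : ℝ) := by exact_mod_cast hn
  have hn0 : (0 : ℝ) < n := by linarith
  set N := n ^ 2 - 1 with hNdef
  have hNcast : ((N : ℕ) : ℝ) = (n : ℝ) ^ 2 - 1 := by
    have h1 : 1 ≤ n ^ 2 := by nlinarith
    rw [hNdef]
    push_cast [Nat.cast_sub h1]
    ring
  have hprodval : ∏ k ∈ Icc 1 N, Real.exp (-(k : ℝ) / n) =
      Real.exp (-(((n : ℝ) ^ 3 - n) / 2)) := by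
    rw [← Real.exp_sum]
    congr 1
    have e : ∑ k ∈ Icc 1 N, (-(k : ℝ) / n) = (∑ k ∈ Icc 1 N, (k : ℝ)) * (-1 / n) := by
      rw [Finset.sum_mul]
      exact Finset.sum_congr rfl fun k _ => by ring
    rw [e, newman_sum_Icc_id, hNcast]
    field_simp
    ring
  -- Part A : denominator lower bound, for every x
  have partA : ∀ x : ℝ, 2 * Real.exp (-(((n : ℝ) ^ 3 - n) / 2)) ≤ H x + H (-x) := by
    intro x
    have h := (newman_evenodd (fun k => Real.exp (-(k : ℝ) / n))
      (fun k => Real.exp_pos _) (Icc 1 N) x).1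
    rw [hH x, hH (-x), ← hprodval]
    exact h
  have hDpos : ∀ x : ℝ, 0 < H x + H (-x) := fun x =>
    lt_of_lt_of_le (by positivity) (partA x)
  -- numeric facts
  have hexpn3 : Real.exp (-(n : ℝ)) ≤ 1 / 3 := by
    have h3 : (3 : ℝ) ≤ Real.exp (n : ℝ) := by
      have := Real.add_one_le_exp (n : ℝ); linarith
    rw [Real.exp_neg, inv_le_comm₀ (Real.exp_pos _) (by norm_num : (0:ℝ) < 1/3)]
    norm_num; linarith
  have h2A : 2 * Real.exp (-(N : ℝ) / n) ≤ 3 * Real.exp (-(n : ℝ)) := by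
    have e : -(N : ℝ) / n = (-(n : ℝ)) + 1 / n := by
      rw [hNcast]; field_simp; ring
    rw [e, Real.exp_add]
    have h16 : Real.exp ((1:ℝ) / n) ≤ Real.exp ((1:ℝ) / 6) := by
      apply Real.exp_le_exp.mpr
      rw [div_le_div_iff₀ hn0 (by norm_num)]; linarith
    have := newman_exp_sixth
    nlinarith [Real.exp_pos (-(n : ℝ))]
  -- key bound for y ∈ [0,1]
  have key : ∀ y : ℝ, 0 ≤ y → y ≤ 1 →
      |y - y * (H y - H (-y)) / (H y + H (-y))| ≤ 3 * Real.exp (-(n : ℝ)) := by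
    intro y hy0 hy1
    have hDy := hDpos y
    have hHy0 : 0 < H y := by
      rw [hH]
      exact Finset.prod_pos fun k _ => by positivity
    have heq : y - y * (H y - H (-y)) / (H y + H (-y)) =
        2 * y * H (-y) / (H y + H (-y)) := by
      field_simp
      ring
    rw [heq, abs_div, abs_of_pos hDy, div_le_iff₀ hDy]
    rcases le_total y (Real.exp (-(N : ℝ) / n)) with hcase | hcase
    · -- small y : H(-y) ≥ 0 and ≤ D
      have hHneg : 0 ≤ H (-y) := by
        rw [hH]
        apply Finset.prod_nonneg
        intro k hk
        have hkN : (k : ℝ) ≤ (N : ℝ) := by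
          exact_mod_cast (Finset.mem_Icc.mp hk).2
        have : Real.exp (-(N : ℝ) / n) ≤ Real.exp (-(k : ℝ) / n) := by
          apply Real.exp_le_exp.mpr
          rw [div_le_div_iff₀ hn0 hn0]
          nlinarith
        linarith
      have habs : |2 * y * H (-y)| = 2 * y * H (-y) := by
        rw [abs_of_nonneg (by positivity)]
      rw [habs]
      have hHD : H (-y) ≤ H y + H (-y) := by linarith
      nlinarith [mul_nonneg hy0 (sub_nonneg.mpr hHD),
        mul_nonneg (sub_nonneg.mpr hcase) hDy.le,
        mul_nonneg (sub_nonneg.mpr h2A) hDy.le]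
    · -- main case
      have hmain : |H (-y)| ≤ Real.exp (-(n : ℝ)) * H y := by
        rw [hH (-y), hH y]
        exact newman_main_est n N hn hNdef y hy1 hcase
      have habs2 : |2 * y * H (-y)| = 2 * y * |H (-y)| := by
        rw [abs_mul, abs_of_nonneg (by linarith : (0:ℝ) ≤ 2 * y)]
      rw [habs2]
      have t2 : (2 / 3) * H y ≤ H y + H (-y) := by
        have h1 : -|H (-y)| ≤ H (-y) := neg_abs_le _
        nlinarith
      nlinarith [abs_nonneg (H (-y)),
        mul_nonneg (sub_nonneg.mpr hy1) (abs_nonneg (H (-y))),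
        mul_le_mul_of_nonneg_left t2 (by positivity : (0:ℝ) ≤ 3 * Real.exp (-(n : ℝ))),
        Real.exp_pos (-(n : ℝ))]
  refine ⟨fun x hx => ⟨partA x, ?_⟩, ?_⟩
  · obtain ⟨hx1, hx2⟩ := hx
    rcases le_or_gt 0 x with hx0 | hx0
    · rw [abs_of_nonneg hx0]
      exact key x hx0 hx2
    · rw [abs_of_nonpos hx0.le]
      have h := key (-x) (by linarith) (by linarith)
      rw [neg_neg] at h
      have e : -x - x * (H x - H (-x)) / (H x + H (-x)) =
          -x - (-x) * (H (-x) - H x) / (H (-x) + H x) := by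
        rw [show (-x) * (H (-x) - H x) = x * (H x - H (-x)) from by ring,
          add_comm (H (-x)) (H x)]
      rw [e]
      exact h
  · -- 3 e^{-n} ≤ 2^{-(n+1)}
    have h2 : (2 : ℝ) ^ (-((n : ℤ) + 1)) = 1 / (2 : ℝ) ^ (n + 1) := by
      rw [show (-((n : ℤ) + 1)) = -((n + 1 : ℕ) : ℤ) from by push_cast; ring,
        zpow_neg, zpow_natCast, one_div]
    have key3 : 3 * (2 : ℝ) ^ (n + 1) ≤ Real.exp (n : ℝ) := by
      have e1 : Real.exp ((n : ℕ) : ℝ) = Real.exp 1 ^ n := by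
        rw [← Real.exp_nat_mul, mul_one]
      have e2 : (2.718 : ℝ) ^ n ≤ Real.exp 1 ^ n := by
        apply pow_le_pow_left₀ (by norm_num)
        have := Real.exp_one_gt_d9; linarith
      have e3 : (2.718 : ℝ) ^ n = 2 ^ n * 1.359 ^ n := by
        rw [← mul_pow]; norm_num
      have e4 : (6 : ℝ) ≤ 1.359 ^ n :=
        le_trans (by norm_num) (pow_le_pow_right₀ (by norm_num) hn)
      calc 3 * (2 : ℝ) ^ (n + 1) = 6 * 2 ^ n := by ring
        _ ≤ 1.359 ^ n * 2 ^ n := by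
            nlinarith [pow_pos (show (0:ℝ) < 2 from by norm_num) n]
        _ = 2.718 ^ n := by rw [e3]; ring
        _ ≤ Real.exp 1 ^ n := e2
        _ = Real.exp (n : ℝ) := e1.symm
    have e5 : 3 * Real.exp (-(n : ℝ)) = 3 / Real.exp (n : ℝ) := by
      rw [Real.exp_neg]; ring
    rw [e5, h2, div_le_div_iff₀ (Real.exp_pos _) (by positivity)]
    nlinarith [key3]
end

section
/- (Proposition 3.3.5.) For all integers n ≥ 6 and m ≥ 0, there exist real polynomials p and q, each of degree at most (n+m)², such that for all x ∈ [−2^m, 2^m] one has q(x) ≥ 1 and | |x| − p(x)/q(x) | ≤ 2^{−n}. -/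
/-!
Newman's construction. Put `ξ = 1 - 1/M`, `d = M² - 1` and `B(s) = ∏_{k<d} (s + ξ^k)`. The
rational function `s (B(s) - B(-s)) / (B(s) + B(-s))` is even and, for `s ≥ 0`, differs from `s`
by `2 s B(-s) / (B(s) + B(-s))`, so everything hinges on `|B(-s)| / B(s) = ∏ |s - ξ^k| / (s + ξ^k)`.
For `ξ^(i+1) ≤ s ≤ ξ^i` the factor of the node `ξ^(i+j)` is at most
`(1 - ξ^j)/(1 + ξ^j) ≤ j/(2M - j)` (Bernoulli), so when `M - 1` nodes lie below `s` the ratio is at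
most `2 / centralBinom M ≤ 2^-(M+2)`. Otherwise `s ≤ ξ^(M(M-1)) ≤ e^(1-M) ≤ 2^-M`, and the error is
at most `s` anyway. Rescaling `x = 2^m s` turns the error `2^-(n+m)` on `[-1, 1]` into `2^-n` on
`[-2^m, 2^m]`.
-/

open Finset Polynomial

theorem abs_prod_le_prod_mul_prod {ι : Type*} [DecidableEq ι] {s t : Finset ι} (hts : t ⊆ s)
    {f g c : ι → ℝ} (hfg : ∀ i ∈ s, |f i| ≤ g i) (hc : ∀ i ∈ t, |f i| ≤ c i * g i) :
    |∏ i ∈ s, f i| ≤ (∏ i ∈ t, c i) * ∏ i ∈ s, g i := by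
  rw [← prod_sdiff hts, ← prod_sdiff (f := g) hts, abs_mul, abs_prod, abs_prod, mul_left_comm,
    ← prod_mul_distrib]
  exact mul_le_mul (prod_le_prod (fun i _ => abs_nonneg _) fun i hi => hfg i (sdiff_subset hi))
    (prod_le_prod (fun i _ => abs_nonneg _) hc) (prod_nonneg fun i _ => abs_nonneg _)
    (prod_nonneg fun i hi => (abs_nonneg _).trans (hfg i (sdiff_subset hi)))

theorem sub_mul_sub_div_add_eq {s B E : ℝ} (h : B + E ≠ 0) :
    s - s * (B - E) / (B + E) = 2 * s * E / (B + E) := by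
  field_simp; ring

theorem abs_sub_mul_div_le_self {s B E : ℝ} (hs : 0 ≤ s) (hE : 0 ≤ E) (hEB : E ≤ B) (hB : 0 < B) :
    |s - s * (B - E) / (B + E)| ≤ s := by
  have hBE : 0 < B + E := by linarith
  rw [sub_mul_sub_div_add_eq hBE.ne', abs_of_nonneg (by positivity), div_le_iff₀ hBE]
  nlinarith

theorem abs_sub_mul_div_le_of_abs_le {s B E ρ : ℝ} (hs : 0 ≤ s) (hB : 0 < B) (hE : |E| ≤ ρ * B)
    (hρ : ρ ≤ 1 / 2) : B / 2 ≤ B + E ∧ |s - s * (B - E) / (B + E)| ≤ 4 * ρ * s := by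
  have hρ₀ : 0 ≤ ρ := nonneg_of_mul_nonneg_left ((abs_nonneg E).trans hE) hB
  have hEB : B / 2 ≤ B + E := by nlinarith [neg_abs_le E]
  have hBE : 0 < B + E := by linarith
  refine ⟨hEB, ?_⟩
  rw [sub_mul_sub_div_add_eq hBE.ne', abs_div, abs_of_pos hBE, abs_mul,
    abs_of_nonneg (by positivity), div_le_iff₀ hBE]
  calc 2 * s * |E| ≤ 2 * s * (ρ * B) := by gcongr
    _ = 4 * ρ * s * (B / 2) := by ring
    _ ≤ 4 * ρ * s * (B + E) := by gcongr

noncomputable def newmanPoly (ξ : ℝ) (d : ℕ) : ℝ[X] :=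
  ∏ k ∈ range d, (X + C (ξ ^ k))

section NewmanPoly

variable {ξ s : ℝ} {d : ℕ}

theorem eval_newmanPoly : (newmanPoly ξ d).eval s = ∏ k ∈ range d, (s + ξ ^ k) := by
  simp [newmanPoly, eval_prod]

theorem natDegree_newmanPoly_le : (newmanPoly ξ d).natDegree ≤ d :=
  (natDegree_prod_le _ _).trans <| by
    simpa using sum_le_card_nsmul (range d) _ 1 fun k _ => (natDegree_X_add_C (ξ ^ k)).le

theorem eval_newmanPoly_pos (hξ : 0 < ξ) (hs : 0 ≤ s) : 0 < (newmanPoly ξ d).eval s := by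
  rw [eval_newmanPoly]
  exact prod_pos fun k _ => by positivity

theorem eval_zero_le_eval_newmanPoly (hξ : 0 ≤ ξ) (hs : 0 ≤ s) :
    (newmanPoly ξ d).eval 0 ≤ (newmanPoly ξ d).eval s := by
  simp only [eval_newmanPoly]
  exact prod_le_prod (fun k _ => by positivity) fun k _ => by linarith

theorem eval_neg_newmanPoly_mem_Icc (hξ₀ : 0 ≤ ξ) (hξ₁ : ξ ≤ 1) (hs₀ : 0 ≤ s)
    (hs : s ≤ ξ ^ (d - 1)) :
    (newmanPoly ξ d).eval (-s) ∈ Set.Icc 0 ((newmanPoly ξ d).eval s) := by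
  simp only [eval_newmanPoly]
  have hfactor : ∀ k ∈ range d, 0 ≤ -s + ξ ^ k := fun k hk =>
    by linarith [pow_le_pow_of_le_one hξ₀ hξ₁ (Nat.le_sub_one_of_lt (mem_range.mp hk))]
  exact ⟨prod_nonneg hfactor, prod_le_prod hfactor fun k _ => by linarith⟩

theorem abs_neg_add_pow_le (hξ₀ : 0 ≤ ξ) (hξ₁ : ξ ≤ 1) {i j : ℕ} (hj : 1 ≤ j)
    (hs₁ : ξ ^ (i + 1) ≤ s) (hs₂ : s ≤ ξ ^ i) :
    |-s + ξ ^ (i + j)| ≤ (1 - ξ ^ j) / (1 + ξ ^ j) * (s + ξ ^ (i + j)) := by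
  have hnode : ξ ^ (i + j) ≤ s := (pow_le_pow_of_le_one hξ₀ hξ₁ (by omega)).trans hs₁
  have hξj : 0 ≤ ξ ^ j := pow_nonneg hξ₀ j
  rw [abs_of_nonpos (by linarith), div_mul_eq_mul_div, le_div_iff₀ (by positivity), pow_add]
  nlinarith [mul_le_mul_of_nonneg_right hs₂ hξj]

theorem abs_eval_neg_newmanPoly_le (hξ₀ : 0 ≤ ξ) (hξ₁ : ξ ≤ 1) {i L : ℕ}
    (hs₁ : ξ ^ (i + 1) ≤ s) (hs₂ : s ≤ ξ ^ i) (hL : i + 1 + L ≤ d) :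
    |(newmanPoly ξ d).eval (-s)| ≤
      (∏ t ∈ range L, (1 - ξ ^ (t + 1)) / (1 + ξ ^ (t + 1))) * (newmanPoly ξ d).eval s := by
  have hs₀ : 0 ≤ s := (pow_nonneg hξ₀ _).trans hs₁
  have hwindow : ∏ t ∈ range L, (1 - ξ ^ (t + 1)) / (1 + ξ ^ (t + 1)) =
      ∏ k ∈ Ico (i + 1) (i + 1 + L), (1 - ξ ^ (k - i)) / (1 + ξ ^ (k - i)) := by
    rw [prod_Ico_eq_prod_range]
    refine prod_congr (by congr 1; omega) fun t _ => ?_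
    rw [show i + 1 + t - i = t + 1 by omega]
  rw [hwindow]
  simp only [eval_newmanPoly]
  refine abs_prod_le_prod_mul_prod (fun k hk => mem_range.mpr (by simp at hk; omega))
    (fun k _ => abs_le.mpr ⟨by linarith [pow_nonneg hξ₀ k], by linarith⟩) fun k hk => ?_
  obtain ⟨j, rfl⟩ : ∃ j, k = i + j := ⟨k - i, by simp at hk; omega⟩
  rw [Nat.add_sub_cancel_left]
  exact abs_neg_add_pow_le hξ₀ hξ₁ (by simp at hk; omega) hs₁ hs₂

end NewmanPoly

theorem one_sub_one_div_mem_Ioo {M : ℕ} (hM : 2 ≤ M) : (1 - 1 / M : ℝ) ∈ Set.Ioo 0 1 := by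
  have hM' : (2 : ℝ) ≤ M := by exact_mod_cast hM
  constructor
  · rw [sub_pos, div_lt_one (by linarith)]; linarith
  · linarith [show 0 < 1 / (M : ℝ) by positivity]

theorem one_sub_pow_div_one_add_pow_le {M j : ℕ} (hj : j < 2 * M) :
    (1 - (1 - 1 / M : ℝ) ^ j) / (1 + (1 - 1 / M) ^ j) ≤ j / (2 * M - j) := by
  have hM : (1 : ℝ) ≤ M := by exact_mod_cast (show 1 ≤ M by omega)
  have hj' : (j : ℝ) < 2 * M := by exact_mod_cast hj
  have hbernoulli : 1 - j / M ≤ (1 - 1 / M : ℝ) ^ j := by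
    have h := one_add_mul_le_pow (a := -(1 / M : ℝ)) (by
      linarith [div_le_one_of_le₀ hM (by positivity : (0 : ℝ) ≤ M)]) j
    calc 1 - j / M = 1 + j * -(1 / M : ℝ) := by ring
      _ ≤ _ := h
      _ = _ := by rw [← sub_eq_add_neg]
  have hpos : 0 < 1 - j / (M : ℝ) + 1 := by
    rw [sub_add_eq_add_sub, sub_pos, div_lt_iff₀ (by positivity)]; linarith
  rw [div_le_div_iff₀ (by linarith) (by linarith)]
  have : (M : ℝ) - j ≤ M * (1 - 1 / M) ^ j := by
    calc (M : ℝ) - j = M * (1 - j / M) := by field_simp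
      _ ≤ _ := by gcongr
  nlinarith

theorem eight_mul_le_two_pow {M : ℕ} (hM : 6 ≤ M) : 8 * M ≤ 2 ^ M := by
  induction M, hM using Nat.le_induction with
  | base => norm_num
  | succ M hM ih => rw [pow_succ]; omega

theorem two_pow_le_centralBinom {M : ℕ} (hM : 6 ≤ M) : 2 ^ (M + 3) ≤ M.centralBinom := by
  refine le_of_lt (Nat.lt_of_mul_lt_mul_left (a := M) (lt_of_le_of_lt ?_
    (Nat.four_pow_lt_mul_centralBinom M (by omega))))
  calc M * 2 ^ (M + 3) = 8 * M * 2 ^ M := by ring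
    _ ≤ 2 ^ M * 2 ^ M := by gcongr; exact eight_mul_le_two_pow hM
    _ = 4 ^ M := by rw [← mul_pow]; norm_num

theorem two_pow_mul_factorial_le_descFactorial {M : ℕ} (hM : 6 ≤ M) :
    2 ^ (M + 2) * (M - 1).factorial ≤ (2 * M - 1).descFactorial (M - 1) := by
  obtain ⟨K, rfl⟩ : ∃ K, M = K + 1 := ⟨M - 1, by omega⟩
  have hdesc := Nat.factorial_mul_descFactorial (show K ≤ 2 * K + 1 by omega)
  have hchoose := Nat.choose_mul_factorial_mul_factorial (show K + 1 ≤ 2 * (K + 1) by omega)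
  rw [show 2 * K + 1 - K = K + 1 by omega] at hdesc
  rw [show 2 * (K + 1) - (K + 1) = K + 1 by omega, ← Nat.centralBinom_eq_two_mul_choose,
    show 2 * (K + 1) = 2 * K + 1 + 1 by ring, Nat.factorial_succ (2 * K + 1), ← hdesc] at hchoose
  simp only [Nat.add_sub_cancel, show 2 * (K + 1) - 1 = 2 * K + 1 by omega]
  refine Nat.le_of_mul_le_mul_left ?_ (show 0 < (2 * K + 1 + 1) * (K + 1).factorial by positivity)
  calc (2 * K + 1 + 1) * (K + 1).factorial * (2 ^ (K + 1 + 2) * K.factorial)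
      = 2 ^ (K + 1 + 3) * (K + 1).factorial * (K + 1).factorial := by
        rw [Nat.factorial_succ K]; ring
    _ ≤ (K + 1).centralBinom * (K + 1).factorial * (K + 1).factorial := by
        gcongr; exact two_pow_le_centralBinom hM
    _ = _ := by rw [hchoose]; ring

-- The product equals `(M - 1)! M! / (2M - 1)! = 2 / centralBinom M`.
theorem prod_range_div_two_mul_sub_le {M : ℕ} (hM : 6 ≤ M) :
    ∏ t ∈ range (M - 1), ((t + 1 : ℝ) / (2 * M - (t + 1))) ≤ 1 / 2 ^ (M + 2) := by
  have hnum : ∏ t ∈ range (M - 1), (t + 1 : ℝ) = (M - 1).factorial := by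
    rw [← prod_range_add_one_eq_factorial]; push_cast; rfl
  have hden : ∏ t ∈ range (M - 1), (2 * M - (t + 1) : ℝ) = (2 * M - 1).descFactorial (M - 1) := by
    rw [Nat.descFactorial_eq_prod_range]; push_cast
    refine prod_congr rfl fun t ht => ?_
    rw [Nat.cast_sub (by simp at ht; omega), Nat.cast_sub (by omega)]; push_cast; ring
  have hkey : ((2 ^ (M + 2) * (M - 1).factorial : ℕ) : ℝ) ≤ (2 * M - 1).descFactorial (M - 1) :=
    by exact_mod_cast two_pow_mul_factorial_le_descFactorial hM
  rw [prod_div_distrib, hnum, hden, div_le_div_iff₀ (lt_of_lt_of_le (by positivity) hkey)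
    (by positivity)]
  push_cast at hkey
  linarith

theorem one_sub_one_div_pow_le_one_div_two_pow {M : ℕ} (hM : 4 ≤ M) :
    (1 - 1 / M : ℝ) ^ (M * (M - 1)) ≤ 1 / 2 ^ M := by
  have hM' : (4 : ℝ) ≤ M := by exact_mod_cast hM
  have hξ := (one_sub_one_div_mem_Ioo (M := M) (by omega)).1.le
  have hexp : (1 - 1 / M : ℝ) ^ M ≤ Real.exp (-1) :=
    Real.one_sub_div_pow_le_exp_neg (by linarith)
  have htwo : (2 : ℝ) ^ M ≤ Real.exp (M - 1) := by
    rw [← Real.exp_log (by norm_num : (0 : ℝ) < 2), ← Real.exp_nat_mul, Real.exp_le_exp]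
    nlinarith [Real.log_two_lt_d9]
  calc (1 - 1 / M : ℝ) ^ (M * (M - 1)) = ((1 - 1 / M : ℝ) ^ M) ^ (M - 1) := pow_mul _ _ _
    _ ≤ Real.exp (-1) ^ (M - 1) := by gcongr
    _ = 1 / Real.exp (M - 1) := by
        rw [← Real.exp_nat_mul, one_div, ← Real.exp_neg, Nat.cast_sub (by omega)]
        push_cast; ring_nf
    _ ≤ 1 / 2 ^ M := by gcongr

theorem prod_one_sub_pow_div_one_add_pow_le {M : ℕ} (hM : 6 ≤ M) :
    ∏ t ∈ range (M - 1), (1 - (1 - 1 / M : ℝ) ^ (t + 1)) / (1 + (1 - 1 / M) ^ (t + 1)) ≤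
      1 / 2 ^ (M + 2) := by
  obtain ⟨hξ₀, hξ₁⟩ := one_sub_one_div_mem_Ioo (M := M) (by omega)
  refine le_trans (prod_le_prod (fun t _ => div_nonneg ?_ (by positivity)) fun t ht => ?_)
    (prod_range_div_two_mul_sub_le hM)
  · linarith [pow_le_one₀ hξ₀.le hξ₁.le (n := t + 1)]
  · simpa using one_sub_pow_div_one_add_pow_le (M := M) (j := t + 1) (by simp at ht; omega)

theorem mul_sub_one_le_of_sq_sub_one_lt {M i : ℕ} (h : M ^ 2 - 1 < i + M) : M * (M - 1) ≤ i := by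
  rcases M with _ | K
  · simp
  · rw [Nat.add_sub_cancel]
    ring_nf at *
    omega

theorem exists_abs_eval_neg_newmanPoly_le {M : ℕ} (hM : 6 ≤ M) {s : ℝ}
    (hs₀ : (1 - 1 / M : ℝ) ^ (M ^ 2 - 2) < s) (hs₁ : s ≤ 1) :
    ∃ ρ ≤ 1 / 2, 4 * ρ * s ≤ 1 / 2 ^ M ∧
      |(newmanPoly (1 - 1 / M) (M ^ 2 - 1)).eval (-s)| ≤
        ρ * (newmanPoly (1 - 1 / M) (M ^ 2 - 1)).eval s := by
  set ξ : ℝ := 1 - 1 / M with hξ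
  obtain ⟨hξ₀, hξ₁⟩ := one_sub_one_div_mem_Ioo (M := M) (by omega)
  obtain ⟨i, hi₁, hi₂⟩ :=
    exists_nat_pow_near_of_lt_one ((pow_pos hξ₀ _).trans hs₀) hs₁ hξ₀ hξ₁
  have hs : 0 ≤ s := hs₀.le.trans' (pow_nonneg hξ₀.le _)
  -- Either the `M - 1` nodes below `s` all exist, or `s` is so small that one node suffices.
  by_cases hwin : i + 1 + (M - 1) ≤ M ^ 2 - 1
  · have hρ := prod_one_sub_pow_div_one_add_pow_le hM
    have htwo : (1 : ℝ) / 2 ^ (M + 2) = 1 / 2 ^ M / 4 := by rw [pow_add]; ring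
    refine ⟨_, hρ.trans ?_, ?_, abs_eval_neg_newmanPoly_le hξ₀.le hξ₁.le hi₁.le hi₂ hwin⟩
    · rw [htwo, div_le_iff₀ (by norm_num), div_le_iff₀ (by positivity)]
      linarith [one_le_pow₀ (by norm_num : (1 : ℝ) ≤ 2) (n := M)]
    · calc 4 * _ * s ≤ 4 * (1 / 2 ^ (M + 2)) * 1 := by gcongr
        _ = 1 / 2 ^ M := by rw [htwo]; ring
  · have hi : i + 2 ≤ M ^ 2 - 1 := by
      have := (pow_lt_pow_iff_right_of_lt_one₀ hξ₀ hξ₁).mp (hs₀.trans_le hi₂)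
      omega
    have hρ : (1 - ξ) / (1 + ξ) ≤ 1 / 4 := by
      rw [div_le_iff₀ (by linarith), hξ]
      linarith [show 1 / (M : ℝ) ≤ 1 / 6 by gcongr; exact_mod_cast hM]
    refine ⟨_, hρ.trans (by norm_num), ?_, by
      simpa only [prod_range_one, zero_add, pow_one] using
        abs_eval_neg_newmanPoly_le hξ₀.le hξ₁.le hi₁.le hi₂ (L := 1) (by omega)⟩
    calc 4 * ((1 - ξ) / (1 + ξ)) * s ≤ s := by nlinarith
      _ ≤ ξ ^ i := hi₂
      _ ≤ ξ ^ (M * (M - 1)) :=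
        pow_le_pow_of_le_one hξ₀.le hξ₁.le (mul_sub_one_le_of_sq_sub_one_lt (by omega))
      _ ≤ 1 / 2 ^ M := one_sub_one_div_pow_le_one_div_two_pow (by omega)

theorem newmanPoly_estimate {M : ℕ} (hM : 6 ≤ M) {s : ℝ} (hs₀ : 0 ≤ s) (hs₁ : s ≤ 1) :
    let N := newmanPoly (1 - 1 / M) (M ^ 2 - 1)
    N.eval 0 / 2 ≤ N.eval s + N.eval (-s) ∧
      |s - s * (N.eval s - N.eval (-s)) / (N.eval s + N.eval (-s))| ≤ 1 / 2 ^ M := by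
  intro N
  set ξ : ℝ := 1 - 1 / M
  obtain ⟨hξ₀, hξ₁⟩ := one_sub_one_div_mem_Ioo (M := M) (by omega)
  have hB : 0 < N.eval s := eval_newmanPoly_pos hξ₀ hs₀
  have hB₀ : N.eval 0 ≤ N.eval s := eval_zero_le_eval_newmanPoly hξ₀.le hs₀
  rcases le_or_gt s (ξ ^ (M ^ 2 - 2)) with hsmall | hlarge
  · obtain ⟨hE₀, hEB⟩ := eval_neg_newmanPoly_mem_Icc (d := M ^ 2 - 1) hξ₀.le hξ₁.le hs₀
      (by rwa [show M ^ 2 - 1 - 1 = M ^ 2 - 2 by omega])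
    refine ⟨by linarith [eval_newmanPoly_pos (d := M ^ 2 - 1) hξ₀ le_rfl], ?_⟩
    calc _ ≤ s := abs_sub_mul_div_le_self hs₀ hE₀ hEB hB
      _ ≤ ξ ^ (M * (M - 1)) := hsmall.trans (pow_le_pow_of_le_one hξ₀.le hξ₁.le
          (mul_sub_one_le_of_sq_sub_one_lt (by omega)))
      _ ≤ 1 / 2 ^ M := one_sub_one_div_pow_le_one_div_two_pow (by omega)
  · obtain ⟨ρ, hρ, hρs, hE⟩ := exists_abs_eval_neg_newmanPoly_le hM hlarge hs₁
    obtain ⟨hBE, herr⟩ := abs_sub_mul_div_le_of_abs_le hs₀ hB hE hρ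
    exact ⟨by linarith, herr.trans hρs⟩

def ApproximatesAbsOn (r ε : ℝ) (p q : ℝ[X]) : Prop :=
  ∀ x ∈ Set.Icc (-r) r, 1 ≤ q.eval x ∧ |(|x| - p.eval x / q.eval x)| ≤ ε

theorem exists_approximatesAbsOn_one {M : ℕ} (hM : 6 ≤ M) :
    ∃ p q : ℝ[X], p.natDegree ≤ M ^ 2 ∧ q.natDegree ≤ M ^ 2 ∧
      ApproximatesAbsOn 1 (1 / 2 ^ M) p q := by
  set N := newmanPoly (1 - 1 / M) (M ^ 2 - 1)
  set c : ℝ := 2 / N.eval 0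
  have hN₀ : 0 < N.eval 0 := eval_newmanPoly_pos (one_sub_one_div_mem_Ioo (by omega)).1 le_rfl
  have hdeg : N.natDegree ≤ M ^ 2 - 1 := natDegree_newmanPoly_le
  have hM₂ : 1 ≤ M ^ 2 := Nat.one_le_pow _ _ (by omega)
  refine ⟨C c * (X * (N - N.comp (-X))), C c * (N + N.comp (-X)), ?_, ?_, fun x hx => ?_⟩
  · grw [natDegree_C_mul_le, natDegree_mul_le, natDegree_X_le, natDegree_sub_le, natDegree_comp,
      natDegree_neg, natDegree_X, mul_one, max_self, hdeg]
    omega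
  · grw [natDegree_C_mul_le, natDegree_add_le, natDegree_comp, natDegree_neg, natDegree_X, mul_one,
      max_self, hdeg]
    omega
  have heven : x * (N.eval x - N.eval (-x)) = |x| * (N.eval |x| - N.eval (-|x|)) ∧
      N.eval x + N.eval (-x) = N.eval |x| + N.eval (-|x|) := by
    rcases abs_choice x with h | h <;> rw [h]
    · exact ⟨rfl, rfl⟩
    · rw [neg_neg]; exact ⟨by ring, add_comm _ _⟩
  obtain ⟨hq, herr⟩ := newmanPoly_estimate hM (abs_nonneg x) (abs_le.mpr hx)
  simp only [eval_mul, eval_C, eval_X, eval_sub, eval_add, eval_comp, eval_neg, heven.1,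
    heven.2, mul_div_mul_left _ _ (show c ≠ 0 by positivity)]
  refine ⟨?_, herr⟩
  calc (1 : ℝ) = c * (N.eval 0 / 2) := by simp only [c]; field_simp
    _ ≤ _ := by gcongr

theorem ApproximatesAbsOn.rescale {ε u : ℝ} {p q : ℝ[X]} (h : ApproximatesAbsOn 1 ε p q)
    (hu : 0 < u) :
    ApproximatesAbsOn u (u * ε) (C u * p.comp (C u⁻¹ * X)) (q.comp (C u⁻¹ * X)) := by
  intro x hx
  have hx' : u⁻¹ * x ∈ Set.Icc (-1) 1 := by
    rw [Set.mem_Icc, ← abs_le, abs_mul, abs_of_pos (inv_pos.mpr hu), inv_mul_le_iff₀ hu, mul_one]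
    exact abs_le.mpr hx
  obtain ⟨hq, herr⟩ := h _ hx'
  simp only [eval_mul, eval_C, eval_comp, eval_X]
  refine ⟨hq, ?_⟩
  have hscale : |x| - u * p.eval (u⁻¹ * x) / q.eval (u⁻¹ * x) =
      u * (|u⁻¹ * x| - p.eval (u⁻¹ * x) / q.eval (u⁻¹ * x)) := by
    rw [abs_mul, abs_of_pos (inv_pos.mpr hu)]; field_simp
  rw [hscale, abs_mul, abs_of_pos hu]
  gcongr

theorem natDegree_comp_C_mul_X_le (p : ℝ[X]) (a : ℝ) :
    (p.comp (C a * X)).natDegree ≤ p.natDegree := by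
  grw [natDegree_comp_le, natDegree_C_mul_le, natDegree_X, mul_one]

/-- Proposition 3.3.5: rational approximation of the absolute value on `[-2^m, 2^m]`. -/
theorem abs_rational_approx (n m : ℕ) (hn : 6 ≤ n) :
    ∃ p q : Polynomial ℝ,
      p.degree ≤ ((n + m) ^ 2 : ℕ) ∧ q.degree ≤ ((n + m) ^ 2 : ℕ) ∧
      ∀ x ∈ Set.Icc (-(2 : ℝ) ^ m) ((2 : ℝ) ^ m),
        1 ≤ q.eval x ∧ |(|x| - p.eval x / q.eval x)| ≤ (2 : ℝ) ^ (-(n : ℤ)) := by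
  obtain ⟨p, q, hp, hq, hpq⟩ := exists_approximatesAbsOn_one (M := n + m) (by omega)
  have hε : (2 : ℝ) ^ m * (1 / 2 ^ (n + m)) = 2 ^ (-(n : ℤ)) := by
    rw [zpow_neg, zpow_natCast, pow_add]; field_simp
  refine ⟨C (2 ^ m) * p.comp (C (2 ^ m)⁻¹ * X), q.comp (C (2 ^ m)⁻¹ * X),
    natDegree_le_iff_degree_le.mp <|
      (natDegree_C_mul_le _ _).trans <| (natDegree_comp_C_mul_X_le p _).trans hp,
    natDegree_le_iff_degree_le.mp <| (natDegree_comp_C_mul_X_le q _).trans hq, ?_⟩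
  rw [← hε]
  exact hpq.rescale (by positivity)
end

section
/- (Inequality (4) of Section 5.2.2.) For every continuous function f : [−1,1] → ℝ and every integer n ≥ 1, one has (π/4)·|A_{n+1}(f)| ≤ E_n(f). -/
/-!
For every polynomial `p` of degree `≤ n`, `cos ((n+1)θ)` is orthogonal on `[0, π]` to `p (cos θ)`,
so `A_{n+1}(f) = A_{n+1}(f - p)`. Bounding `|f - p|` by its supremum `M` on `[-1, 1]` gives
`|A_{n+1}(f)| ≤ (2/π) M ∫_0^π |cos ((n+1)θ)| dθ = 4M/π`.
-/

/-- The `k`-th Chebyshev coefficient of `f`: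
`A_k(f) = (2/π) ∫_0^π cos (kθ) f (cos θ) dθ`. -/
noncomputable def chebCoeff (f : ℝ → ℝ) (k : ℕ) : ℝ :=
  (2 / Real.pi) * ∫ θ in (0 : ℝ)..Real.pi, Real.cos (k * θ) * f (Real.cos θ)

/-- `E_n(f)`: the distance in sup norm on `[-1,1]` from `f` to polynomials of degree `≤ n`. -/
noncomputable def bestApprox (f : ℝ → ℝ) (n : ℕ) : ℝ :=
  sInf {e : ℝ | ∃ p : Polynomial ℝ, p.degree ≤ (n : ℕ) ∧
    e = ⨆ x : Set.Icc (-1 : ℝ) 1, |f x.1 - p.eval x.1|}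

open Real Set intervalIntegral Polynomial

lemma integral_cos_nat_mul_eq_zero {m : ℕ} (hm : m ≠ 0) : ∫ θ in 0..π, cos (m * θ) = 0 := by
  rw [integral_comp_mul_left cos (Nat.cast_ne_zero.mpr hm)]
  simp [sin_nat_mul_pi]

/-- Product-to-sum, `cos (mθ) cos θ = (cos ((m+1)θ) + cos ((m-1)θ)) / 2`, lowers the power of
`cos θ` while keeping the frequency above it. -/
lemma integral_cos_nat_mul_mul_cos_pow_eq_zero {k m : ℕ} (hkm : k < m) :
    ∫ θ in 0..π, cos (m * θ) * cos θ ^ k = 0 := by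
  induction k generalizing m with
  | zero => simpa using integral_cos_nat_mul_eq_zero hkm.ne_bot
  | succ k ih =>
    obtain ⟨m, rfl⟩ := Nat.exists_eq_succ_of_ne_zero (by omega : m ≠ 0)
    have hsplit : ∀ θ : ℝ, cos ((m + 1 : ℕ) * θ) * cos θ ^ (k + 1)
        = (cos ((m + 2 : ℕ) * θ) * cos θ ^ k + cos (m * θ) * cos θ ^ k) / 2 := by
      intro θ
      push_cast
      rw [show ((m : ℝ) + 2) * θ = (m + 1) * θ + θ by ring,
        show (m : ℝ) * θ = (m + 1) * θ - θ by ring, cos_add, cos_sub]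
      ring
    have hint (j : ℕ) :
        IntervalIntegrable (fun θ => cos (j * θ) * cos θ ^ k) MeasureTheory.volume 0 π := by
      apply Continuous.intervalIntegrable; fun_prop
    simp only [hsplit, integral_div, integral_add (hint _) (hint _),
      ih (by omega : k < m + 2), ih (by omega : k < m)]
    simp

lemma integral_cos_nat_mul_mul_eval_cos_eq_zero {p : ℝ[X]} {m : ℕ} (hp : p.natDegree < m) :
    ∫ θ in 0..π, cos (m * θ) * p.eval (cos θ) = 0 := by
  simp only [eval_eq_sum_range, Finset.mul_sum, mul_left_comm _ (p.coeff _)]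
  rw [integral_finsetSum fun k _ => by apply Continuous.intervalIntegrable; fun_prop]
  refine Finset.sum_eq_zero fun k hk => ?_
  rw [integral_const_mul, integral_cos_nat_mul_mul_cos_pow_eq_zero, mul_zero]
  exact (Finset.mem_range_succ_iff.mp hk).trans_lt hp

lemma periodic_abs_cos : Function.Periodic (fun x => |cos x|) π := by
  intro x
  simp [cos_add_pi]

lemma integral_abs_cos : ∫ θ in 0..π, |cos θ| = 2 := by
  have hshift := periodic_abs_cos.intervalIntegral_add_eq 0 (-(π / 2))
  rw [zero_add, show -(π / 2) + π = π / 2 by ring] at hshift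
  rw [hshift, integral_congr fun θ hθ => abs_of_nonneg (cos_nonneg_of_mem_Icc ?_)]
  · simp [integral_cos]; norm_num
  · rwa [uIcc_of_le (by linarith [pi_pos])] at hθ

lemma integral_abs_cos_nat_mul {m : ℕ} (hm : m ≠ 0) : ∫ θ in 0..π, |cos (m * θ)| = 2 := by
  have hperiods := periodic_abs_cos.intervalIntegral_add_zsmul_eq m 0
    fun _ _ => continuous_cos.abs.intervalIntegrable _ _
  simp only [zero_add, natCast_zsmul, nsmul_eq_mul, integral_abs_cos] at hperiods
  rw [integral_comp_mul_left (fun x => |cos x|) (Nat.cast_ne_zero.mpr hm), mul_zero,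
    hperiods, smul_eq_mul]
  field_simp

lemma chebCoeff_sub_eval {f : ℝ → ℝ} (hf : ContinuousOn f (Icc (-1) 1)) {p : ℝ[X]} {m : ℕ}
    (hp : p.natDegree < m) : chebCoeff (fun x => f x - p.eval x) m = chebCoeff f m := by
  have hfcos : Continuous fun θ => f (cos θ) :=
    hf.comp_continuous continuous_cos fun θ => ⟨neg_one_le_cos θ, cos_le_one θ⟩
  simp only [chebCoeff, mul_sub]
  rw [integral_sub, integral_cos_nat_mul_mul_eval_cos_eq_zero hp, sub_zero]
  · exact ((continuous_cos.comp (continuous_const_mul _)).mul hfcos).intervalIntegrable _ _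
  · apply Continuous.intervalIntegrable; fun_prop

lemma abs_chebCoeff_le {g : ℝ → ℝ} {m : ℕ} (hm : m ≠ 0) {M : ℝ}
    (hM : ∀ x ∈ Icc (-1 : ℝ) 1, |g x| ≤ M) : |chebCoeff g m| ≤ 4 / π * M := by
  have hint : |∫ θ in 0..π, cos (m * θ) * g (cos θ)| ≤ ∫ θ in 0..π, |cos (m * θ)| * M := by
    refine norm_integral_le_of_norm_le (f := fun θ => cos (m * θ) * g (cos θ)) pi_pos.le
      (Filter.Eventually.of_forall fun θ _ => ?_) ?_
    · rw [Real.norm_eq_abs, abs_mul]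
      exact mul_le_mul_of_nonneg_left (hM _ ⟨neg_one_le_cos θ, cos_le_one θ⟩) (abs_nonneg _)
    · apply Continuous.intervalIntegrable; fun_prop
  rw [integral_mul_const, integral_abs_cos_nat_mul hm] at hint
  rw [chebCoeff, abs_mul, abs_of_pos (by positivity : (0 : ℝ) < 2 / π)]
  calc 2 / π * |∫ θ in 0..π, cos (m * θ) * g (cos θ)| ≤ 2 / π * (2 * M) := by gcongr
    _ = 4 / π * M := by ring

lemma IsCompact.le_ciSup_of_continuousOn {X : Type*} [TopologicalSpace X] {s : Set X}
    (hs : IsCompact s) {g : X → ℝ} (hg : ContinuousOn g s) {y : X} (hy : y ∈ s) :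
    g y ≤ ⨆ x : s, g x :=
  have : CompactSpace s := isCompact_iff_compactSpace.mp hs
  le_ciSup (isCompact_range hg.domRestrict).bddAbove ⟨y, hy⟩

theorem chebCoeff_le_bestApprox_general (f : ℝ → ℝ)
    (hf : ContinuousOn f (Set.Icc (-1 : ℝ) 1)) (n : ℕ) :
    Real.pi / 4 * |chebCoeff f (n + 1)| ≤ bestApprox f n := by
  refine le_csInf ⟨_, 0, by simp, rfl⟩ ?_
  rintro _ ⟨p, hp, rfl⟩
  have hpn : p.natDegree < n + 1 := Nat.lt_succ_of_le (natDegree_le_iff_degree_le.mpr hp)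
  have hfp : ContinuousOn (fun x => f x - p.eval x) (Icc (-1) 1) :=
    hf.sub p.continuous.continuousOn
  have hcoeff := abs_chebCoeff_le (Nat.succ_ne_zero n) fun _ hy =>
    isCompact_Icc.le_ciSup_of_continuousOn hfp.abs hy
  rw [chebCoeff_sub_eval hf hpn] at hcoeff
  calc π / 4 * |chebCoeff f (n + 1)| ≤ π / 4 * (4 / π * _) := by gcongr
    _ = _ := by field_simp

/-- Inequality (4) of Section 5.2.2: `(π/4)·|A_{n+1}(f)| ≤ E_n(f)`. -/
theorem chebCoeff_le_bestApprox (f : ℝ → ℝ)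
    (hf : ContinuousOn f (Set.Icc (-1 : ℝ) 1)) (n : ℕ) (hn : 1 ≤ n) :
    Real.pi / 4 * |chebCoeff f (n + 1)| ≤ bestApprox f n :=
  chebCoeff_le_bestApprox_general f hf n
end

section
/- (Derivative bound for Chebyshev polynomials used in the proofs of Theorems 5.2.4 and 5.2.13.) For all integers n ≥ 0 and k ≥ 0 and every x ∈ [−1,1], the k-th derivative of the n-th Chebyshev polynomial satisfies |T_n^{(k)}(x)| ≤ n^{2k}. -/
open Polynomial Polynomial.Chebyshev

private lemma cheb_abs_T_le (n : ℤ) (x : ℝ) (hx : x ∈ Set.Icc (-1 : ℝ) 1) :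
    |(T ℝ n).eval x| ≤ 1 := by
  obtain ⟨h1, h2⟩ := hx
  have hcos : x = Real.cos (Real.arccos x) := (Real.cos_arccos h1 h2).symm
  rw [hcos, T_real_cos]
  exact Real.abs_cos_le_one _

private lemma cheb_iter_deriv_add (k : ℕ) (p q : ℝ[X]) :
    derivative^[k] (p + q) = derivative^[k] p + derivative^[k] q := by
  induction k generalizing p q with
  | zero => rfl
  | succ k ih => simp [Function.iterate_succ_apply, derivative_add, ih]

private lemma cheb_rec (n : ℤ) (hn : 2 ≤ n) :
    derivative (T ℝ n) = Polynomial.C (2*(n:ℝ)) * T ℝ (n-1)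
      + Polynomial.C ((n:ℝ)/((n:ℝ)-2)) * derivative (T ℝ (n-2)) := by
  rcases eq_or_lt_of_le hn with h2 | h3
  · subst h2
    norm_num [T_two, T_one, T_zero, derivative_sub, derivative_one, derivative_mul,
      derivative_X_pow, derivative_ofNat, map_ofNat]
    ring
  · have hn3 : 3 ≤ n := h3
    have hU : U ℝ (n-1) - U ℝ (n-3) = 2 * T ℝ (n-1) := by
      have h1 := U_sub_two ℝ (n-1)
      have h2 := T_eq_U_sub_X_mul_U ℝ (n-1)
      have he : (n:ℤ) - 1 - 2 = n - 3 := by ring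
      rw [he] at h1
      linear_combination -h1 - 2*h2
    have hd1 := T_derivative_eq_U (R := ℝ) n
    have hd2 := T_derivative_eq_U (R := ℝ) (n-2)
    have he : (n:ℤ) - 2 - 1 = n - 3 := by ring
    rw [he] at hd2
    have hne : (n:ℝ) - 2 ≠ 0 := by
      have : (3:ℝ) ≤ (n:ℝ) := by exact_mod_cast hn3
      linarith
    rw [hd1, hd2]
    have hcoe : ((n:ℤ) : ℝ[X]) = Polynomial.C (n:ℝ) := (Polynomial.C_eq_intCast n).symm
    have hcoe2 : (((n:ℤ)-2 : ℤ) : ℝ[X]) = Polynomial.C ((n:ℝ)-2) := by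
      rw [← Polynomial.C_eq_intCast]; push_cast; ring_nf
    rw [hcoe, hcoe2]
    have hc : Polynomial.C ((n:ℝ)/((n:ℝ)-2)) * (Polynomial.C ((n:ℝ)-2) * U ℝ (n-3))
        = Polynomial.C (n:ℝ) * U ℝ (n-3) := by
      rw [← mul_assoc, ← Polynomial.C_mul, div_mul_cancel₀ _ hne]
    rw [hc]
    have hC2 : Polynomial.C (2*(n:ℝ)) = 2 * Polynomial.C (n:ℝ) := by
      rw [Polynomial.C_mul]; norm_cast
    linear_combination Polynomial.C (n:ℝ) * hU - T ℝ (n-1) * hC2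

private lemma cheb_main : ∀ n k : ℕ, ∀ x : ℝ, x ∈ Set.Icc (-1 : ℝ) 1 →
    |((derivative)^[k] (T ℝ (n : ℤ))).eval x| ≤ (n : ℝ) ^ (2 * k) := by
  intro n
  induction n using Nat.strong_induction_on with
  | _ n IH =>
  intro k x hx
  match k with
  | 0 => simpa using cheb_abs_T_le n x hx
  | (k+1) =>
    match n with
    | 0 =>
      rw [show ((0:ℕ):ℤ) = 0 by norm_num, T_zero,
        iterate_derivative_one (Nat.succ_pos k)]
      norm_num
    | 1 =>
      rw [show ((1:ℕ):ℤ) = 1 by norm_num, T_one]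
      match k with
      | 0 => simp
      | (k+1) =>
        rw [iterate_derivative_X (by omega)]
        norm_num
    | (m+2) =>
      have hrec := cheb_rec ((m:ℤ)+2) (by omega)
      have he1 : ((m:ℤ)+2) - 1 = ((m+1 : ℕ) : ℤ) := by push_cast; ring
      have he2 : ((m:ℤ)+2) - 2 = ((m : ℕ) : ℤ) := by push_cast; ring
      rw [he1, he2] at hrec
      have hcast : (((m+2:ℕ)):ℤ) = (m:ℤ)+2 := by push_cast; ring
      rw [hcast, Function.iterate_succ_apply, hrec, cheb_iter_deriv_add,
        iterate_derivative_C_mul, iterate_derivative_C_mul,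
        ← Function.iterate_succ_apply]
      set N : ℝ := (m:ℝ) + 2 with hN
      have hNc : (((m:ℤ)+2 : ℤ):ℝ) = N := by push_cast; ring
      rw [eval_add, eval_mul, eval_mul, eval_C, eval_C]
      have hb1 := IH (m+1) (by omega) k x hx
      have hb2 := IH m (by omega) (k+1) x hx
      have hexp : (((m+2:ℕ)):ℝ) = N := by rw [hN]; push_cast; ring
      rw [hexp]
      have hNpos : (0:ℝ) < N := by rw [hN]; positivity
      have habs : |(2*((((m:ℤ)+2):ℤ):ℝ)) * (derivative^[k] (T ℝ ((m+1:ℕ):ℤ))).eval x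
            + ((((m:ℤ)+2):ℤ):ℝ)/(((((m:ℤ)+2):ℤ):ℝ)-2) * (derivative^[k+1] (T ℝ ((m:ℕ):ℤ))).eval x|
          ≤ 2*N*(((m+1:ℕ)):ℝ)^(2*k) + (N/(m:ℝ)) * (((m:ℕ)):ℝ)^(2*(k+1)) := by
        refine (abs_add_le _ _).trans ?_
        rw [abs_mul, abs_mul, abs_mul, hNc, abs_two]
        have eN : |N| = N := abs_of_nonneg (le_of_lt hNpos)
        have e2 : |N/(N-2)| = N/(m:ℝ) := by
          rw [show N-2 = (m:ℝ) from by rw [hN]; ring]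
          exact abs_of_nonneg (div_nonneg (le_of_lt hNpos) (by positivity))
        rw [eN, e2]
        exact add_le_add
          (mul_le_mul_of_nonneg_left hb1 (by positivity))
          (mul_le_mul_of_nonneg_left hb2 (div_nonneg (le_of_lt hNpos) (by positivity)))
      refine habs.trans ?_
      push_cast
      rcases Nat.eq_zero_or_pos m with hm | hm
      · subst hm
        norm_num [hN]
        rw [show (2:ℝ)^(2*(k+1)) = 4 * 4^k from by
          rw [show 2*(k+1) = 2*k+2 from by ring, pow_add, pow_mul]; norm_num; ring]
        nlinarith [one_le_pow₀ (by norm_num : (1:ℝ) ≤ 4) (n := k)]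
      · have hm1 : (1:ℝ) ≤ (m:ℝ) := by exact_mod_cast hm
        have hdiv : (N/(m:ℝ)) * (m:ℝ)^(2*(k+1)) = N * ((m:ℝ) * (m:ℝ)^(2*k)) := by
          rw [show 2*(k+1) = (2*k+1)+1 from by ring, pow_succ, pow_succ]
          field_simp
        rw [hdiv]
        have hP : ((m:ℝ))^(2*k) ≤ N^(2*k) :=
          pow_le_pow_left₀ (by positivity) (by rw [hN]; linarith) _
        have hQ : ((m:ℝ)+1)^(2*k) ≤ N^(2*k) :=
          pow_le_pow_left₀ (by positivity) (by rw [hN]; linarith) _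
        have t1 : 2*N*((m:ℝ)+1)^(2*k) ≤ 2*N*N^(2*k) :=
          mul_le_mul_of_nonneg_left hQ (by positivity)
        have t2 : N * ((m:ℝ) * (m:ℝ)^(2*k)) ≤ N * ((m:ℝ) * N^(2*k)) :=
          mul_le_mul_of_nonneg_left
            (mul_le_mul_of_nonneg_left hP (by positivity)) (le_of_lt hNpos)
        have hfin : 2*N*N^(2*k) + N * ((m:ℝ) * N^(2*k)) = N^(2*(k+1)) := by
          rw [show 2*(k+1) = 2*k+2 from by ring, pow_add, hN]
          ring
        linarith

/-- Derivative bound for Chebyshev polynomials (used in Theorems 5.2.4 and 5.2.13):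
`|T_n^{(k)}(x)| ≤ n^{2k}` for `x ∈ [-1,1]`. -/
theorem chebyshev_iterated_deriv_bound (n k : ℕ) (x : ℝ) (hx : x ∈ Set.Icc (-1 : ℝ) 1) :
    |((Polynomial.derivative)^[k] (Polynomial.Chebyshev.T ℝ (n : ℤ))).eval x|
      ≤ (n : ℝ) ^ (2 * k) :=
  cheb_main n k x hx
end

section
/- (Quantitative convergence of the Newton iteration for the inverse, Lemma 4.2.9.) Let m ≥ 1 and n ≥ 1 be integers and let z be a real number with 2^{−m} < z < 2^m. Define y_0 = 2^{−m} and y_{i+1} = y_i·(2 − z·y_i) for i ∈ ℕ. Then for every integer i ≥ 3m + ⌈log₂(m+n)⌉, one has |z^{−1} − y_i| ≤ 2^{−n}. -/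
/-- Quantitative convergence of the Newton iteration for the inverse (Lemma 4.2.9). -/
theorem newton_inverse_convergence (m n : ℕ) (hm : 1 ≤ m) (hn : 1 ≤ n)
    (z : ℝ) (hz1 : (2 : ℝ) ^ (-(m : ℤ)) < z) (hz2 : z < (2 : ℝ) ^ m)
    (y : ℕ → ℝ) (hy0 : y 0 = (2 : ℝ) ^ (-(m : ℤ)))
    (hyrec : ∀ i : ℕ, y (i + 1) = y i * (2 - z * y i)) :
    ∀ i : ℕ, 3 * m + Nat.clog 2 (m + n) ≤ i → |z⁻¹ - y i| ≤ (2 : ℝ) ^ (-(n : ℤ)) := by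
  intro i hi
  have hz0 : (0:ℝ) < z := lt_trans (by positivity) hz1
  set b : ℝ := (2:ℝ) ^ (-(m:ℤ)) with hb
  have hb0 : 0 < b := by positivity
  have hbinv : b = ((2:ℝ)^m)⁻¹ := by rw [hb, zpow_neg, zpow_natCast]
  have hbb : b * b = ((2:ℝ)^(2*m))⁻¹ := by
    rw [hbinv, ← mul_inv, ← pow_add, two_mul]
  have hmb : (2:ℝ)^m * b = 1 := by
    rw [hbinv]; exact mul_inv_cancel₀ (by positivity)
  -- error recursion
  have key : ∀ j, 1 - z * y j = (1 - z * b) ^ (2^j) := by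
    intro j
    induction j with
    | zero => simp [hy0, hb]
    | succ j ih =>
      have h1 : 1 - z * y (j+1) = (1 - z * y j)^2 := by rw [hyrec]; ring
      rw [h1, ih, ← pow_mul, pow_succ]
  have he0_pos : 0 ≤ 1 - z * b := by
    have : z * b < 1 := by
      have := mul_lt_mul_of_pos_right hz2 hb0
      rw [hmb] at this; linarith
    linarith
  have he0_le : 1 - z * b ≤ 1 - b * b := by nlinarith [hz1, hb0]
  -- exp bound
  have hexp1 : 1 - b * b ≤ Real.exp (-(b*b)) := by
    have := Real.add_one_le_exp (-(b*b)); linarith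
  have hbbnn : 0 ≤ 1 - b * b := le_trans he0_pos he0_le
  have hstep : (1 - z * b) ^ (2^i) ≤ Real.exp (-(b*b)) ^ (2^i) := by
    apply pow_le_pow_left₀ he0_pos
    exact le_trans he0_le hexp1
  have hexp2 : Real.exp (-(b*b)) ^ (2^i) = Real.exp (-((2^i : ℕ) * (b*b))) := by
    rw [← Real.exp_nat_mul]; ring_nf
  -- exponent size
  have hnat : (2:ℕ)^(2*m) * (m+n) ≤ 2^i := by
    calc (2:ℕ)^(2*m) * (m+n) ≤ 2^(2*m) * 2^(m + Nat.clog 2 (m+n)) := by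
          apply Nat.mul_le_mul_left
          calc m + n ≤ 2 ^ Nat.clog 2 (m+n) := Nat.le_pow_clog one_lt_two _
            _ ≤ 2 ^ (m + Nat.clog 2 (m+n)) := Nat.pow_le_pow_right (by norm_num) (Nat.le_add_left _ _)
      _ = 2^(2*m + (m + Nat.clog 2 (m+n))) := (pow_add 2 _ _).symm
      _ ≤ 2^i := Nat.pow_le_pow_right (by norm_num) (by omega)
  have hreal : ((m:ℝ)+n) * (2:ℝ)^(2*m) ≤ (2:ℝ)^i := by
    have := (Nat.cast_le (α := ℝ)).mpr hnat
    push_cast at this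
    linarith
  have hexpo : ((m:ℝ)+n) ≤ ((2:ℕ)^i : ℕ) * (b*b) := by
    rw [hbb]
    push_cast
    have h : (2:ℝ)^i * ((2:ℝ)^(2*m))⁻¹ = (2:ℝ)^i / 2^(2*m) := by ring
    rw [h, le_div_iff₀ (by positivity)]
    linarith
  have hchain : (1 - z * b) ^ (2^i) ≤ Real.exp (-((m:ℝ)+n)) := by
    calc (1 - z * b) ^ (2^i) ≤ Real.exp (-((2^i : ℕ) * (b*b))) := by rw [← hexp2]; exact hstep
      _ ≤ Real.exp (-((m:ℝ)+n)) := by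
          apply Real.exp_le_exp.mpr
          simp only [neg_le_neg_iff]
          push_cast at hexpo ⊢
          linarith
  have hexp3 : Real.exp (-((m:ℝ)+n)) ≤ ((1:ℝ)/2) ^ (m+n) := by
    have h1 : Real.exp (-((m:ℝ)+n)) = Real.exp (-1) ^ (m+n) := by
      rw [← Real.exp_nat_mul]; push_cast; ring_nf
    rw [h1]
    apply pow_le_pow_left₀ (Real.exp_pos _).le
    rw [Real.exp_neg]
    have h2 : (2:ℝ) ≤ Real.exp 1 := by
      have := Real.exp_one_gt_d9; linarith
    rw [one_div]
    exact inv_anti₀ (by norm_num) h2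
  -- assemble
  have habs : |z⁻¹ - y i| = (1 - z * y i) / z := by
    rw [abs_of_nonneg]
    · field_simp
    · have := key i
      have hnn : 0 ≤ 1 - z * y i := by rw [this]; positivity
      have : z⁻¹ - y i = (1 - z * y i) / z := by field_simp
      rw [this]
      positivity
  rw [habs, key i]
  have hfin : (1 - z * b) ^ (2^i) / z ≤ (2:ℝ)^m * ((1:ℝ)/2)^(m+n) := by
    rw [div_le_iff₀ hz0]
    calc (1 - z * b) ^ (2^i) ≤ ((1:ℝ)/2)^(m+n) := le_trans hchain hexp3
      _ = (2:ℝ)^m * ((1:ℝ)/2)^(m+n) * b := by rw [mul_comm ((2:ℝ)^m) _, mul_assoc, hmb, mul_one]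
      _ ≤ (2:ℝ)^m * ((1:ℝ)/2)^(m+n) * z := by
          apply mul_le_mul_of_nonneg_left (le_of_lt hz1)
          positivity
  apply le_trans hfin
  have : (2:ℝ)^m * ((1:ℝ)/2)^(m+n) = (2:ℝ)^(-(n:ℤ)) := by
    rw [one_div, inv_pow, ← zpow_natCast (2:ℝ) m, ← zpow_natCast (2:ℝ) (m+n), ← zpow_neg,
      ← zpow_add₀ (by norm_num : (2:ℝ) ≠ 0)]
    congr 1
    push_cast; ring
  rw [this]
end
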